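/- arXiv:1510.03614 — 4 statements merged into one kernel-verified Lean document; each statement's English description precedes it below -/
import Mathlib

section
/- Let G be a connected graph and X a minimum vertex cover of G of size p ≥ 1. Then G has at most 2p - 2 edge separators (bridges) that are not incident to a pendant vertex outside of X. -/
open SimpleGraph

/-- A rainbow edge coloring: every pair of vertices is joined by a path
whose edge colors are pairwise distinct. -/
def IsRainbowEdgeColoring {V : Type*} (G : SimpleGraph V) (c : Sym2 V → ℕ) : Prop :=
  ∀ u v : V, ∃ p : G.Walk u v, p.IsPath ∧ (p.edges.map c).Nodup

/-- The rainbow connection number: least `k` admitting a rainbow edge coloring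
using colors `< k` on all edges. -/
noncomputable def rc {V : Type*} (G : SimpleGraph V) : ℕ :=
  sInf {k | ∃ c : Sym2 V → ℕ, (∀ e ∈ G.edgeSet, c e < k) ∧ IsRainbowEdgeColoring G c}

/-- Internal vertices of a walk. -/
def SimpleGraph.Walk.internals {V : Type*} {G : SimpleGraph V} {u v : V}
    (p : G.Walk u v) : List V := p.support.tail.dropLast

/-- A rainbow vertex coloring: every pair of vertices is joined by a path
whose internal vertices have pairwise distinct colors. -/
def IsRainbowVertexColoring {V : Type*} (G : SimpleGraph V) (c : V → ℕ) : Prop :=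
  ∀ u v : V, ∃ p : G.Walk u v, p.IsPath ∧ (p.internals.map c).Nodup

noncomputable def rvc {V : Type*} (G : SimpleGraph V) : ℕ :=
  sInf {k | ∃ c : V → ℕ, (∀ v, c v < k) ∧ IsRainbowVertexColoring G c}

/-- A strong rainbow vertex coloring: every pair of vertices is joined by a
shortest path whose internal vertices have pairwise distinct colors. -/
def IsStrongRainbowVertexColoring {V : Type*} (G : SimpleGraph V) (c : V → ℕ) : Prop :=
  ∀ u v : V, ∃ p : G.Walk u v, p.IsPath ∧ p.length = G.dist u v ∧ (p.internals.map c).Nodup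

noncomputable def srvc {V : Type*} (G : SimpleGraph V) : ℕ :=
  sInf {k | ∃ c : V → ℕ, (∀ v, c v < k) ∧ IsStrongRainbowVertexColoring G c}

/-- `X` is a vertex cover of `G`. -/
def IsVertexCover {V : Type*} (G : SimpleGraph V) (X : Set V) : Prop :=
  ∀ u v : V, G.Adj u v → u ∈ X ∨ v ∈ X

/-
Contracting each component of `G` minus its bridges to a point turns `G` into a tree whose edges
are the bridges of `G`, and the components meeting `X` form a vertex cover `Q` of it with
`|Q| ≤ p`. A vertex `a` outside these components has only bridges at it, leading to distinct
components, so if it is a leaf of the tree it is a pendant of `G`; hence the bridges to count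
inject into the edges of the tree at no leaf outside `Q`. In a tree with `m` edges and vertex
cover `Q`, the vertices outside `Q` are independent and of positive degree: if `L` of them are
leaves and `R` are not, counting the edges they meet gives `|L| + 2|R| ≤ m`, while
`m + 1 = |Q| + |L| + |R|`, so `m - |L| ≤ 2|Q| - 2`.
-/

namespace SimpleGraph

open Finset

variable {V W : Type*}

def nonPendantBridges (G : SimpleGraph V) (X : Set V) : Set (Sym2 V) :=
  {e | G.IsBridge e ∧ ¬ ∃ v ∈ e, v ∉ X ∧ (G.neighborSet v).ncard = 1}

lemma Preconnected.mem_edgeSet_of_isBridge {G : SimpleGraph V} (hG : G.Preconnected)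
    {e : Sym2 V} (he : G.IsBridge e) : e ∈ G.edgeSet := by
  induction e using Sym2.inductionOn with
  | hf u v => exact he.reachable_iff_adj.mp (hG u v)

lemma Reachable.lift {G : SimpleGraph V} {H : SimpleGraph W} (f : V → W)
    (hf : ∀ u v, G.Adj u v → H.Reachable (f u) (f v)) {u v : V} (h : G.Reachable u v) :
    H.Reachable (f u) (f v) := by
  rw [reachable_iff_reflTransGen] at h ⊢
  exact h.lift' f fun a b hab => (reachable_iff_reflTransGen _ _).mp (hf a b hab)

lemma ncard_neighborSet_eq_degree (G : SimpleGraph V) (v : V) [Fintype (G.neighborSet v)] :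
    (G.neighborSet v).ncard = G.degree v := by
  rw [← Nat.card_coe_set_eq, Nat.card_eq_fintype_card, card_neighborSet_eq_degree]

section Counting

variable {T : SimpleGraph W} [Fintype W] [DecidableEq W] [DecidableRel T.Adj]

lemma card_biUnion_incidenceFinset_of_isIndepSet {S : Finset W} (hS : T.IsIndepSet S) :
    #(S.biUnion fun v => T.incidenceFinset v) = ∑ v ∈ S, T.degree v := by
  rw [Finset.card_biUnion]
  · simp only [card_incidenceFinset_eq_degree]
  · intro u hu v hv huv
    rw [Function.onFun, ← Finset.disjoint_coe, coe_incidenceFinset, coe_incidenceFinset,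
      Set.disjoint_iff_inter_eq_empty]
    exact T.incidenceSet_inter_incidenceSet_of_not_adj (hS hu hv huv) huv

lemma sum_degree_le_card_edgeFinset_of_isIndepSet {S : Finset W} (hS : T.IsIndepSet S) :
    ∑ v ∈ S, T.degree v ≤ #T.edgeFinset := by
  rw [← card_biUnion_incidenceFinset_of_isIndepSet hS]
  exact Finset.card_le_card (Finset.biUnion_subset.mpr fun v _ => T.incidenceFinset_subset v)

lemma ncard_nonPendantBridges_add_card_le (hT : T.Preconnected) {Q : Set W}
    (hQ : T.IsVertexCover Q) {L : Finset W} (hL : ∀ v ∈ L, v ∉ Q ∧ T.degree v = 1) :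
    (T.nonPendantBridges Q).ncard + #L ≤ #T.edgeFinset := by
  classical
  have hLindep : T.IsIndepSet L := (isIndepSet_compl_iff_isVertexCover.mpr hQ).mono
    fun v hv => (hL v hv).1
  set D := L.biUnion fun v => T.incidenceFinset v
  have hD : #D = #L := by
    rw [card_biUnion_incidenceFinset_of_isIndepSet hLindep,
      Finset.sum_congr rfl fun v hv => (hL v hv).2, Finset.card_eq_sum_ones]
  have hdisj : Disjoint (T.nonPendantBridges Q).toFinset D := by
    refine Finset.disjoint_left.mpr fun e he heD => ?_
    obtain ⟨v, hvL, hve⟩ := Finset.mem_biUnion.mp heD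
    rw [Set.mem_toFinset] at he
    refine he.2 ⟨v, ((T.mem_incidenceFinset v e).mp hve).2, (hL v hvL).1, ?_⟩
    rw [ncard_neighborSet_eq_degree, (hL v hvL).2]
  have hsub : (T.nonPendantBridges Q).toFinset ∪ D ⊆ T.edgeFinset := by
    refine Finset.union_subset (fun e he => ?_)
      (Finset.biUnion_subset.mpr fun v _ => T.incidenceFinset_subset v)
    rw [Set.mem_toFinset] at he
    exact mem_edgeFinset.mpr (hT.mem_edgeSet_of_isBridge he.1)
  rw [Set.ncard_eq_toFinset_card', ← hD, ← Finset.card_union_of_disjoint hdisj]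
  exact Finset.card_le_card hsub

end Counting

theorem IsTree.ncard_nonPendantBridges_le [Finite W] {T : SimpleGraph W} (hT : T.IsTree)
    {Q : Set W} (hQ : T.IsVertexCover Q) : (T.nonPendantBridges Q).ncard ≤ 2 * Q.ncard - 2 := by
  classical
  have := Fintype.ofFinite W
  rcases Q.eq_empty_or_nonempty with rfl | ⟨q, hq⟩
  · rw [isVertexCover_empty] at hQ
    subst hQ
    have : (⊥ : SimpleGraph W).nonPendantBridges ∅ = ∅ :=
      Set.eq_empty_of_forall_notMem fun e he => by
        simpa using hT.connected.preconnected.mem_edgeSet_of_isBridge he.1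
    simp [this]
  set O := Q.toFinsetᶜ
  set L := O.filter (T.degree · = 1)
  set R := O.filter (¬ T.degree · = 1)
  have hO : T.IsIndepSet O := by
    simpa [O] using isIndepSet_compl_iff_isVertexCover.mpr hQ
  have hdeg_pos : ∀ v ∈ O, 0 < T.degree v := by
    intro v hv
    have : Nontrivial W := ⟨⟨q, v, by rintro rfl; simp_all [O]⟩⟩
    exact hT.connected.preconnected.degree_pos_of_nontrivial v
  have hsum : #L + 2 * #R ≤ #T.edgeFinset :=
    calc #L + 2 * #R = ∑ v ∈ L, T.degree v + ∑ v ∈ R, 2 := by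
          rw [Finset.sum_const, smul_eq_mul, mul_comm, Finset.card_eq_sum_ones L,
            Finset.sum_congr rfl fun v hv => (Finset.mem_filter.mp hv).2]
      _ ≤ ∑ v ∈ L, T.degree v + ∑ v ∈ R, T.degree v := by
          gcongr with v hv
          have := hdeg_pos v (Finset.mem_filter.mp hv).1
          have := (Finset.mem_filter.mp hv).2
          omega
      _ = ∑ v ∈ O, T.degree v := Finset.sum_filter_add_sum_filter_not _ _ _
      _ ≤ #T.edgeFinset := sum_degree_le_card_edgeFinset_of_isIndepSet hO
  have hbridges := ncard_nonPendantBridges_add_card_le hT.connected.preconnected hQ (L := L)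
    fun v hv => by simpa [L, O] using hv
  have hLR : #L + #R = #O := Finset.card_filter_add_card_filter_not _
  have hvert : #T.edgeFinset + 1 = #Q.toFinset + #O :=
    hT.card_edgeFinset.trans (Finset.card_add_card_compl _).symm
  rw [Set.ncard_eq_toFinset_card' Q]
  omega

section BridgeTree

variable {G : SimpleGraph V} {X : Set V} {a b : V}

def deleteBridges (G : SimpleGraph V) : SimpleGraph V := G.deleteEdges {e | G.IsBridge e}

def bridgeTree (G : SimpleGraph V) : SimpleGraph G.deleteBridges.ConnectedComponent where
  Adj c d := c ≠ d ∧ ∃ a b, G.Adj a b ∧ G.IsBridge s(a, b) ∧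
    G.deleteBridges.connectedComponentMk a = c ∧ G.deleteBridges.connectedComponentMk b = d
  symm := by
    constructor
    rintro c d ⟨hne, a, b, hab, hbr, rfl, rfl⟩
    exact ⟨hne.symm, b, a, hab.symm, Sym2.eq_swap ▸ hbr, rfl, rfl⟩
  loopless := by constructor; rintro c ⟨hne, -⟩; exact hne rfl

lemma deleteBridges_le_deleteEdges {e : Sym2 V} (he : G.IsBridge e) :
    G.deleteBridges ≤ G.deleteEdges {e} :=
  deleteEdges_anti (Set.singleton_subset_iff.mpr he)

lemma reachable_deleteEdges_of_connectedComponentMk_eq {e : Sym2 V} (he : G.IsBridge e)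
    {u v : V} (h : G.deleteBridges.connectedComponentMk u = G.deleteBridges.connectedComponentMk v) :
    (G.deleteEdges {e}).Reachable u v :=
  (ConnectedComponent.exact h).mono (deleteBridges_le_deleteEdges he)

lemma IsBridge.connectedComponentMk_ne (h : G.IsBridge s(a, b)) :
    G.deleteBridges.connectedComponentMk a ≠ G.deleteBridges.connectedComponentMk b :=
  fun hab => h (reachable_deleteEdges_of_connectedComponentMk_eq h hab)

lemma connectedComponentMk_eq_of_not_isBridge (hab : G.Adj a b) (h : ¬ G.IsBridge s(a, b)) :
    G.deleteBridges.connectedComponentMk a = G.deleteBridges.connectedComponentMk b :=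
  ConnectedComponent.sound
    (show G.deleteBridges.Adj a b from deleteEdges_adj.mpr ⟨hab, h⟩).reachable

lemma bridgeTree_adj_of_isBridge (hab : G.Adj a b) (h : G.IsBridge s(a, b)) :
    G.bridgeTree.Adj (G.deleteBridges.connectedComponentMk a)
      (G.deleteBridges.connectedComponentMk b) :=
  ⟨h.connectedComponentMk_ne, a, b, hab, h, rfl, rfl⟩

lemma IsBridge.eq_of_connectedComponentMk_eq {c d : V} (h : G.IsBridge s(a, b)) (hcd : G.Adj c d)
    (hac : G.deleteBridges.connectedComponentMk a = G.deleteBridges.connectedComponentMk c)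
    (hbd : G.deleteBridges.connectedComponentMk b = G.deleteBridges.connectedComponentMk d) :
    s(a, b) = s(c, d) := by
  by_contra hne
  have hcd' : (G.deleteEdges {s(a, b)}).Adj c d := deleteEdges_adj.mpr ⟨hcd, Ne.symm hne⟩
  exact h ((reachable_deleteEdges_of_connectedComponentMk_eq h hac).trans
    (hcd'.reachable.trans (reachable_deleteEdges_of_connectedComponentMk_eq h hbd.symm)))

lemma injOn_map_connectedComponentMk_bridges (hG : G.Preconnected) :
    {e | G.IsBridge e}.InjOn (Sym2.map G.deleteBridges.connectedComponentMk) := by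
  intro e₁ h₁ e₂ h₂ h
  induction e₁ using Sym2.inductionOn with | hf a b =>
  induction e₂ using Sym2.inductionOn with | hf c d =>
  have hcd : G.Adj c d := (h₂ : G.IsBridge s(c, d)).reachable_iff_adj.mp (hG c d)
  rcases Sym2.eq_iff.mp h with ⟨hac, hbd⟩ | ⟨had, hbc⟩
  · exact IsBridge.eq_of_connectedComponentMk_eq h₁ hcd hac hbd
  · rw [Sym2.eq_swap (a := c)]
    exact IsBridge.eq_of_connectedComponentMk_eq h₁ hcd.symm had hbc

lemma bridgeTree_connected (hG : G.Connected) : G.bridgeTree.Connected := by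
  have := hG.nonempty
  refine ⟨ConnectedComponent.ind₂ fun u v => ?_⟩
  refine (hG.preconnected u v).lift _ fun a b hab => ?_
  by_cases h : G.IsBridge s(a, b)
  · exact (bridgeTree_adj_of_isBridge hab h).reachable
  · rw [connectedComponentMk_eq_of_not_isBridge hab h]

lemma reachable_deleteEdges_of_reachable_bridgeTree {a₀ b₀ u v : V} (h₀ : G.IsBridge s(a₀, b₀))
    (h : (G.bridgeTree.deleteEdges {s(G.deleteBridges.connectedComponentMk a₀,
      G.deleteBridges.connectedComponentMk b₀)}).Reachable
        (G.deleteBridges.connectedComponentMk u) (G.deleteBridges.connectedComponentMk v)) :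
    (G.deleteEdges {s(a₀, b₀)}).Reachable u v := by
  have hstep : ∀ c d, (G.bridgeTree.deleteEdges {s(G.deleteBridges.connectedComponentMk a₀,
      G.deleteBridges.connectedComponentMk b₀)}).Adj c d →
      (G.deleteEdges {s(a₀, b₀)}).Reachable c.out d.out := by
    intro c d hcd
    rw [deleteEdges_adj] at hcd
    obtain ⟨⟨-, a, b, hab, -, rfl, rfl⟩, hne⟩ := hcd
    have hab' : (G.deleteEdges {s(a₀, b₀)}).Adj a b :=
      deleteEdges_adj.mpr ⟨hab, fun h => hne
        (congrArg (Sym2.map G.deleteBridges.connectedComponentMk) (Set.mem_singleton_iff.mp h))⟩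
    exact (reachable_deleteEdges_of_connectedComponentMk_eq h₀ (Quot.out_eq _)).trans
      (hab'.reachable.trans
        (reachable_deleteEdges_of_connectedComponentMk_eq h₀ (Quot.out_eq _).symm))
  exact (reachable_deleteEdges_of_connectedComponentMk_eq h₀ (Quot.out_eq _).symm).trans
    ((h.lift Quot.out hstep).trans
      (reachable_deleteEdges_of_connectedComponentMk_eq h₀ (Quot.out_eq _)))

lemma bridgeTree_isAcyclic : G.bridgeTree.IsAcyclic := by
  rw [isAcyclic_iff_forall_adj_isBridge]
  rintro _ _ ⟨-, a, b, -, hab, rfl, rfl⟩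
  rw [isBridge_iff]
  exact fun h => hab (reachable_deleteEdges_of_reachable_bridgeTree hab h)

lemma isTree_bridgeTree (hG : G.Connected) : G.bridgeTree.IsTree :=
  ⟨bridgeTree_connected hG, bridgeTree_isAcyclic⟩

lemma IsVertexCover.image_bridgeTree (hX : G.IsVertexCover X) :
    G.bridgeTree.IsVertexCover (G.deleteBridges.connectedComponentMk '' X) := by
  rintro _ _ ⟨-, a, b, hab, -, rfl, rfl⟩
  exact (hX hab).imp (Set.mem_image_of_mem _) (Set.mem_image_of_mem _)

lemma ncard_neighborSet_le_bridgeTree [Finite V] (hX : G.IsVertexCover X)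
    (ha : G.deleteBridges.connectedComponentMk a ∉ G.deleteBridges.connectedComponentMk '' X) :
    (G.neighborSet a).ncard ≤
      (G.bridgeTree.neighborSet (G.deleteBridges.connectedComponentMk a)).ncard := by
  have hbridge : ∀ w ∈ G.neighborSet a, G.IsBridge s(a, w) := by
    intro w hw
    by_contra h
    have hcomp := connectedComponentMk_eq_of_not_isBridge hw h
    rcases hX hw with haX | hwX
    · exact ha ⟨a, haX, rfl⟩
    · exact ha ⟨w, hwX, hcomp.symm⟩
  refine Set.ncard_le_ncard_of_injOn _ (fun w hw => bridgeTree_adj_of_isBridge hw (hbridge w hw)) ?_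
  intro w₁ hw₁ w₂ hw₂ h
  exact Sym2.congr_right.mp
    ((hbridge w₁ hw₁).eq_of_connectedComponentMk_eq hw₂ rfl h)

lemma mapsTo_nonPendantBridges [Finite V] (hG : G.Connected) (hX : G.IsVertexCover X) :
    Set.MapsTo (Sym2.map G.deleteBridges.connectedComponentMk) (G.nonPendantBridges X)
      (G.bridgeTree.nonPendantBridges (G.deleteBridges.connectedComponentMk '' X)) := by
  rintro e ⟨hbr, hnp⟩
  induction e using Sym2.inductionOn with | hf a b =>
  have hab : G.Adj a b := hbr.reachable_iff_adj.mp (hG.preconnected a b)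
  refine ⟨isAcyclic_iff_forall_adj_isBridge.mp bridgeTree_isAcyclic
    (bridgeTree_adj_of_isBridge hab hbr), ?_⟩
  rintro ⟨_, hc, hcX, hc1⟩
  obtain ⟨x, hx, rfl⟩ := Sym2.mem_map.mp hc
  have hx_nonempty : (G.neighborSet x).Nonempty := by
    rcases Sym2.mem_iff.mp hx with rfl | rfl
    exacts [⟨b, hab⟩, ⟨a, hab.symm⟩]
  refine hnp ⟨x, hx, fun h => hcX ⟨x, h, rfl⟩, le_antisymm ?_ ?_⟩
  · exact hc1 ▸ ncard_neighborSet_le_bridgeTree hX hcX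
  · exact (Set.ncard_pos).mpr hx_nonempty

end BridgeTree

end SimpleGraph

theorem bridges_not_incident_pendant_le_general {V : Type*} [Fintype V] (G : SimpleGraph V)
    (hG : G.Connected) (X : Set V) (p : ℕ)
    (hX : _root_.IsVertexCover G X) (hcard : X.ncard = p) :
    ({e : Sym2 V | G.IsBridge e ∧
        ¬ ∃ v ∈ e, v ∉ X ∧ (G.neighborSet v).ncard = 1} : Set (Sym2 V)).ncard
      ≤ 2 * p - 2 := by
  have hX' : G.IsVertexCover X := fun u v huv => hX u v huv
  have himage := Set.ncard_image_le (f := G.deleteBridges.connectedComponentMk) (s := X)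
  calc (G.nonPendantBridges X).ncard
      ≤ (G.bridgeTree.nonPendantBridges (G.deleteBridges.connectedComponentMk '' X)).ncard :=
        Set.ncard_le_ncard_of_injOn _ (mapsTo_nonPendantBridges hG hX')
          ((injOn_map_connectedComponentMk_bridges hG.preconnected).mono fun _ he => he.1)
    _ ≤ 2 * (G.deleteBridges.connectedComponentMk '' X).ncard - 2 :=
        (isTree_bridgeTree hG).ncard_nonPendantBridges_le hX'.image_bridgeTree
    _ ≤ 2 * p - 2 := by omega

theorem bridges_not_incident_pendant_le {V : Type*} [Fintype V] (G : SimpleGraph V)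
    (hG : G.Connected) (X : Set V) (p : ℕ) (hp : 1 ≤ p)
    (hX : _root_.IsVertexCover G X) (hcard : X.ncard = p)
    (hmin : ∀ Y : Set V, _root_.IsVertexCover G Y → p ≤ Y.ncard) :
    ({e : Sym2 V | G.IsBridge e ∧
        ¬ ∃ v ∈ e, v ∉ X ∧ (G.neighborSet v).ncard = 1} : Set (Sym2 V)).ncard
      ≤ 2 * p - 2 :=
  bridges_not_incident_pendant_le_general G hG X p hX hcard
end

section
/- Let G be a connected graph with a vertex cover X of size p, let β(p) = 2p - 2 + p·(p² + 2p·2^p), and let z be the number of edge separators of G. If z < β(p), then rc(G) ≤ β(p) + p² + 2^p · 2p. -/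
open SimpleGraph

/-!
Let the core `S` consist of `X` together with one representative of each type, so that
`|S| ≤ p + 2^p`. Sending each vertex outside `X` to the representative of its type is a graph
endomorphism fixing `S`, so any two vertices of `S` are joined by a path inside `S`. Give every
edge inside `S` and every bridge a color of its own, and an edge `ux` with `u ∉ S`
the color (type of `u`, `x`); this uses at most `p (p + 2^p) + z + 2^p p` colors. A rainbow path
between two vertices is a path inside `S`, extended by one edge at each end that lies outside `S`.
The two end edges can be chosen with different colors unless both ends are pendant at the same
vertex, and then both edges are bridges.
-/

lemma rc_le_ncard_image {V C : Type*} [Finite V] {G : SimpleGraph V} (c : Sym2 V → C)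
    (hc : ∀ u v : V, ∃ p : G.Walk u v, p.IsPath ∧ (p.edges.map c).Nodup) :
    rc G ≤ (c '' G.edgeSet).ncard := by
  have hfin : (c '' G.edgeSet).Finite := G.edgeSet.toFinite.image c
  obtain ⟨g, hg, hinj⟩ := hfin.exists_injOn_of_encard_le (t := Set.Iio (c '' G.edgeSet).ncard)
    (by rw [hfin.cast_ncard_eq.symm, (Set.finite_Iio _).cast_ncard_eq.symm, Set.ncard_Iio_nat])
  refine Nat.sInf_le ⟨g ∘ c, fun e he => hg (Set.mem_image_of_mem c he), fun u v => ?_⟩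
  obtain ⟨p, hp, hnd⟩ := hc u v
  refine ⟨p, hp, ?_⟩
  have hcol : ∀ a ∈ p.edges.map c, a ∈ c '' G.edgeSet := by
    simp only [List.mem_map]
    rintro _ ⟨e, he, rfl⟩
    exact Set.mem_image_of_mem c (p.edges_subset_edgeSet he)
  rw [← List.map_map]
  exact hnd.map_on fun a ha b hb => hinj (hcol a ha) (hcol b hb)

namespace SimpleGraph

variable {V : Type*} {G : SimpleGraph V}

lemma isBridge_of_neighborSet_eq_singleton {u x : V} (h : G.neighborSet u = {x}) :
    G.IsBridge s(u, x) := by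
  have hux : G.Adj u x := by simp [← mem_neighborSet, h]
  refine isBridge_iff_forall_walk_mem_edges.2 fun w => ?_
  cases w with
  | nil => exact absurd rfl hux.ne
  | cons h' q =>
    obtain rfl : _ = x := (Set.ext_iff.1 h _).1 h'
    simp

lemma Adj.of_neighborSet_subset {f : V → V} (hf : ∀ v, G.neighborSet v ⊆ G.neighborSet (f v))
    {u v : V} (h : G.Adj u v) : G.Adj (f u) (f v) :=
  (hf v (hf u h).symm).symm

lemma Preconnected.exists_isPath_support_subset_range (hG : G.Preconnected) {f : V → V}
    (hf : ∀ v, G.neighborSet v ⊆ G.neighborSet (f v)) {u v : V} (hu : f u = u) (hv : f v = v) :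
    ∃ P : G.Walk u v, P.IsPath ∧ ∀ t ∈ P.support, t ∈ Set.range f := by
  classical
  let φ : G →g G := ⟨f, fun h => h.of_neighborSet_subset hf⟩
  obtain ⟨w⟩ := hG u v
  let w' : G.Walk u v := (w.map φ).copy hu hv
  refine ⟨w'.bypass, w'.bypass_isPath, fun t ht => ?_⟩
  have ht' := w'.support_bypass_subset_support ht
  simp only [w', Walk.support_copy, Walk.support_map, List.mem_map] at ht'
  obtain ⟨a, -, rfl⟩ := ht'
  exact ⟨a, rfl⟩

lemma Preconnected.exists_adj_of_ne (hG : G.Preconnected) {u v : V} (h : u ≠ v) :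
    ∃ x, G.Adj u x := by
  obtain ⟨w⟩ := hG u v
  cases w with
  | nil => exact absurd rfl h
  | cons hux _ => exact ⟨_, hux⟩

lemma Walk.mem_sym2_of_mem_edges {s : Set V} {u v : V} {P : G.Walk u v}
    (hP : ∀ t ∈ P.support, t ∈ s) {e : Sym2 V} (he : e ∈ P.edges) : e ∈ s.sym2 := by
  induction e using Sym2.ind with
  | _ a b =>
    exact ⟨hP a (P.fst_mem_support_of_mem_edges he), hP b (P.snd_mem_support_of_mem_edges he)⟩

lemma Walk.isPath_cons_and_nodup {C : Type*} {c : Sym2 V → C} {u x w : V} {P : G.Walk x w}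
    (hP : P.IsPath) (hc : (P.edges.map c).Nodup) (hux : G.Adj u x) (hu : u ∉ P.support)
    (hcu : ∀ e ∈ P.edges, c s(u, x) ≠ c e) :
    (Walk.cons hux P).IsPath ∧ ((Walk.cons hux P).edges.map c).Nodup := by
  refine ⟨hP.cons hu, ?_⟩
  simp only [Walk.edges_cons, List.map_cons, List.nodup_cons, List.mem_map, not_exists, not_and]
  exact ⟨fun e he h => hcu e he h.symm, hc⟩

end SimpleGraph

lemma IsVertexCover.neighborSet_subset {V : Type*} {G : SimpleGraph V} {X : Set V}
    (hX : _root_.IsVertexCover G X) {v : V} (hv : v ∉ X) : G.neighborSet v ⊆ X :=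
  fun _ h => (hX _ _ h).resolve_left hv

lemma IsVertexCover.exists_eq_mk {V : Type*} {G : SimpleGraph V} {X : Set V}
    (hX : _root_.IsVertexCover G X) {e : Sym2 V} (he : e ∈ G.edgeSet) :
    ∃ x ∈ X, ∃ y, e = s(x, y) := by
  induction e using Sym2.ind with
  | _ a b =>
    rcases hX a b he with ha | hb
    · exact ⟨a, ha, b, rfl⟩
    · exact ⟨b, hb, a, Sym2.eq_swap⟩

lemma ncard_image_mk_uncurry_prod_le {α : Type*} [Finite α] (s t : Set α) :
    (Sym2.mk.uncurry '' s ×ˢ t).ncard ≤ s.ncard * t.ncard :=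
  (Set.ncard_image_le (Set.toFinite _)).trans_eq Set.ncard_prod

section VertexCover

variable {V : Type*} [Nonempty V] (G : SimpleGraph V) (X : Set V)

-- Junk when no vertex outside `X` has neighborhood `A`, hence the core below is a range.
noncomputable def typeRep (A : Set V) : V :=
  Classical.epsilon fun w => w ∉ X ∧ G.neighborSet w = A

open scoped Classical in
noncomputable def coverRetract (v : V) : V :=
  if v ∈ X then v else typeRep G X (G.neighborSet v)

abbrev coverCore : Set V := Set.range (coverRetract G X)

variable {G X}

lemma typeRep_spec {v : V} (hv : v ∉ X) :
    typeRep G X (G.neighborSet v) ∉ X ∧ G.neighborSet (typeRep G X (G.neighborSet v)) =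
      G.neighborSet v :=
  Classical.epsilon_spec (p := fun w => w ∉ X ∧ G.neighborSet w = G.neighborSet v)
    ⟨v, hv, rfl⟩

lemma coverRetract_of_mem {v : V} (hv : v ∈ X) : coverRetract G X v = v := by
  simp [coverRetract, hv]

lemma coverRetract_of_notMem {v : V} (hv : v ∉ X) :
    coverRetract G X v = typeRep G X (G.neighborSet v) := by
  simp [coverRetract, hv]

lemma coverRetract_notMem {v : V} (hv : v ∉ X) : coverRetract G X v ∉ X := by
  simpa [coverRetract_of_notMem hv] using (typeRep_spec hv).1

lemma neighborSet_coverRetract (v : V) :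
    G.neighborSet (coverRetract G X v) = G.neighborSet v := by
  by_cases hv : v ∈ X
  · rw [coverRetract_of_mem hv]
  · rw [coverRetract_of_notMem hv, (typeRep_spec hv).2]

lemma coverRetract_coverRetract (v : V) :
    coverRetract G X (coverRetract G X v) = coverRetract G X v := by
  by_cases hv : v ∈ X
  · rw [coverRetract_of_mem hv, coverRetract_of_mem hv]
  · rw [coverRetract_of_notMem (coverRetract_notMem hv), neighborSet_coverRetract,
      coverRetract_of_notMem hv]

lemma coverCore_subset (hX : _root_.IsVertexCover G X) :
    coverCore G X ⊆ X ∪ typeRep G X '' 𝒫 X := by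
  rintro _ ⟨v, rfl⟩
  by_cases hv : v ∈ X
  · exact Or.inl (by rwa [coverRetract_of_mem hv])
  · exact Or.inr ⟨_, hX.neighborSet_subset hv, (coverRetract_of_notMem hv).symm⟩

end VertexCover

section Coloring

variable {V : Type*} [Nonempty V] {G : SimpleGraph V} {X : Set V}

-- On an edge leaving the core, `e.map (coverRetract G X)` encodes (type of the outer end, its
-- cover vertex).
variable (G X) in
open scoped Classical in
noncomputable def coverColoring (e : Sym2 V) : Sym2 V ⊕ Sym2 V :=
  if e ∈ (coverCore G X).sym2 ∨ G.IsBridge e then .inl e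
  else .inr (e.map (coverRetract G X))

lemma mem_coverCore {x : V} (hx : x ∈ X) : x ∈ coverCore G X :=
  ⟨x, coverRetract_of_mem hx⟩

lemma coverColoring_of_mem_sym2 {e : Sym2 V} (he : e ∈ (coverCore G X).sym2) :
    coverColoring G X e = .inl e := by
  simp [coverColoring, he]

lemma coverColoring_ne_of_mem_sym2 {e e' : Sym2 V} (he : e ∉ (coverCore G X).sym2)
    (he' : e' ∈ (coverCore G X).sym2) : coverColoring G X e ≠ coverColoring G X e' := by
  rw [coverColoring_of_mem_sym2 he']
  unfold coverColoring
  split_ifs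
  · exact fun h => he (Sum.inl_injective h ▸ he')
  · exact Sum.inr_ne_inl

lemma coverColoring_eq_coverColoring {u v x x' : V} (hu : u ∉ coverCore G X)
    (hx : x ∈ X) (hx' : x' ∈ X)
    (h : coverColoring G X s(u, x) = coverColoring G X s(v, x')) :
    x = x' ∧ coverRetract G X u = coverRetract G X v ∧ (G.IsBridge s(u, x) → u = v) := by
  have huX : u ∉ X := fun h => hu (mem_coverCore h)
  unfold coverColoring at h
  split_ifs at h with h₁
  · obtain ⟨rfl, rfl⟩ | ⟨rfl, rfl⟩ := Sym2.eq_iff.1 (Sum.inl_injective h)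
    · exact ⟨rfl, rfl, fun _ => rfl⟩
    · exact absurd hx' huX
  · simp only [Sym2.map_mk, coverRetract_of_mem hx, coverRetract_of_mem hx', Sum.inr.injEq,
      Sym2.eq_iff] at h
    obtain ⟨hf, rfl⟩ | ⟨hf, -⟩ := h
    · exact ⟨rfl, hf, fun hb => absurd (Or.inr hb) h₁⟩
    · exact absurd (hf ▸ hx') (coverRetract_notMem huX)

lemma nodup_map_edges_coverColoring {u v : V} {P : G.Walk u v} (hP : P.IsPath)
    (hPS : ∀ t ∈ P.support, t ∈ coverCore G X) :
    (P.edges.map (coverColoring G X)).Nodup := by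
  rw [List.map_congr_left fun e he => coverColoring_of_mem_sym2 (Walk.mem_sym2_of_mem_edges hPS he)]
  exact hP.edges_nodup.map Sum.inl_injective

lemma exists_isPath_support_subset_coverCore (hG : G.Preconnected) {u v : V}
    (hu : u ∈ coverCore G X) (hv : v ∈ coverCore G X) :
    ∃ P : G.Walk u v, P.IsPath ∧ ∀ t ∈ P.support, t ∈ coverCore G X := by
  obtain ⟨u, rfl⟩ := hu
  obtain ⟨v, rfl⟩ := hv
  exact hG.exists_isPath_support_subset_range (fun w => (neighborSet_coverRetract w).ge)
    (coverRetract_coverRetract u) (coverRetract_coverRetract v)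

lemma image_coverColoring_subset (hX : _root_.IsVertexCover G X) :
    coverColoring G X '' G.edgeSet ⊆
      Sum.inl '' (Sym2.mk.uncurry '' X ×ˢ coverCore G X ∪ {e | G.IsBridge e}) ∪
        Sum.inr '' (Sym2.mk.uncurry '' (typeRep G X '' 𝒫 X) ×ˢ X) := by
  rintro _ ⟨e, he, rfl⟩
  obtain ⟨x, hx, y, rfl⟩ := hX.exists_eq_mk he
  unfold coverColoring
  split_ifs with h
  · refine Or.inl ⟨_, ?_, rfl⟩
    rcases h with h | h
    · exact Or.inl ⟨(x, y), ⟨hx, h.2⟩, rfl⟩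
    · exact Or.inr h
  · have hy : y ∉ X := fun hy => h (Or.inl ⟨mem_coverCore hx, mem_coverCore hy⟩)
    refine Or.inr ⟨_, ⟨(coverRetract G X y, x), ⟨?_, hx⟩, rfl⟩, ?_⟩
    · exact ⟨_, hX.neighborSet_subset hy, (coverRetract_of_notMem hy).symm⟩
    · simp [coverRetract_of_mem hx, Sym2.eq_swap]

lemma IsVertexCover.mem_of_adj_of_notMem_coverCore (hX : _root_.IsVertexCover G X)
    {w y : V} (hw : w ∉ coverCore G X) (hwy : G.Adj w y) : y ∈ X :=
  hX.neighborSet_subset (fun h => hw (mem_coverCore h)) hwy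

variable (hX : _root_.IsVertexCover G X) (hG : G.Preconnected)
include hX hG

lemma exists_rainbow_path_of_notMem_of_mem {u v : V} (hu : u ∉ coverCore G X)
    (hv : v ∈ coverCore G X) :
    ∃ P : G.Walk u v, P.IsPath ∧ (P.edges.map (coverColoring G X)).Nodup := by
  obtain ⟨x, hux⟩ := hG.exists_adj_of_ne (ne_of_mem_of_not_mem hv hu).symm
  obtain ⟨P, hP, hPS⟩ := exists_isPath_support_subset_coverCore hG
    (mem_coverCore (hX.mem_of_adj_of_notMem_coverCore hu hux)) hv
  refine ⟨_, Walk.isPath_cons_and_nodup hP (nodup_map_edges_coverColoring hP hPS) hux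
    (fun h => hu (hPS u h)) fun e he => coverColoring_ne_of_mem_sym2 (fun h => hu h.1)
    (Walk.mem_sym2_of_mem_edges hPS he)⟩

lemma exists_adj_coverColoring_ne {u v : V} (hu : u ∉ coverCore G X)
    (hv : v ∉ coverCore G X) (huv : u ≠ v) :
    ∃ x x', G.Adj u x ∧ G.Adj v x' ∧
      coverColoring G X s(u, x) ≠ coverColoring G X s(v, x') := by
  by_contra! h
  have mem_X : ∀ {w y}, w ∉ coverCore G X → G.Adj w y → y ∈ X :=
    hX.mem_of_adj_of_notMem_coverCore
  obtain ⟨x, hux⟩ := hG.exists_adj_of_ne huv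
  obtain ⟨x', hvx'⟩ := hG.exists_adj_of_ne huv.symm
  have hN : G.neighborSet u = G.neighborSet v := by
    rw [← neighborSet_coverRetract u, ← neighborSet_coverRetract v,
      (coverColoring_eq_coverColoring hu (mem_X hu hux) (mem_X hv hvx') (h x x' hux hvx')).2.1]
  have hvx : G.Adj v x := by rwa [← mem_neighborSet, ← hN]
  -- `u` and `v` are pendant at `x`, so their edges to `x` are bridges with distinct colors
  have hNu : G.neighborSet u = {x} := by
    refine Set.eq_singleton_iff_unique_mem.2 ⟨hux, fun y huy => ?_⟩
    rw [hN] at huy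
    exact ((coverColoring_eq_coverColoring hu (mem_X hu hux) (mem_X hv huy) (h x y hux huy)).1).symm
  exact huv ((coverColoring_eq_coverColoring hu (mem_X hu hux) (mem_X hv hvx)
    (h x x hux hvx)).2.2 (isBridge_of_neighborSet_eq_singleton hNu))

lemma exists_rainbow_path_of_notMem_of_notMem {u v : V} (hu : u ∉ coverCore G X)
    (hv : v ∉ coverCore G X) (huv : u ≠ v) :
    ∃ P : G.Walk u v, P.IsPath ∧ (P.edges.map (coverColoring G X)).Nodup := by
  obtain ⟨x, x', hux, hvx', hne⟩ := exists_adj_coverColoring_ne hX hG hu hv huv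
  obtain ⟨P, hP, hPS⟩ := exists_isPath_support_subset_coverCore hG
    (mem_coverCore (hX.mem_of_adj_of_notMem_coverCore hv hvx'))
    (mem_coverCore (hX.mem_of_adj_of_notMem_coverCore hu hux))
  have hQ := Walk.isPath_cons_and_nodup hP (nodup_map_edges_coverColoring hP hPS) hvx'
    (fun h => hv (hPS v h)) fun e he => coverColoring_ne_of_mem_sym2 (fun h => hv h.1)
    (Walk.mem_sym2_of_mem_edges hPS he)
  refine ⟨_, Walk.isPath_cons_and_nodup hQ.1.reverse ?_ hux ?_ ?_⟩
  · rw [Walk.edges_reverse, List.map_reverse, List.nodup_reverse]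
    exact hQ.2
  · simp only [Walk.support_reverse, List.mem_reverse, Walk.support_cons, List.mem_cons, not_or]
    exact ⟨huv, fun h => hu (hPS u h)⟩
  · simp only [Walk.edges_reverse, List.mem_reverse, Walk.edges_cons, List.mem_cons]
    rintro e (rfl | he)
    · exact hne
    · exact coverColoring_ne_of_mem_sym2 (fun h => hu h.1) (Walk.mem_sym2_of_mem_edges hPS he)

lemma exists_rainbow_path_coverColoring (u v : V) :
    ∃ P : G.Walk u v, P.IsPath ∧ (P.edges.map (coverColoring G X)).Nodup := by
  have reverse : ∀ {a b : V},
      (∃ P : G.Walk a b, P.IsPath ∧ (P.edges.map (coverColoring G X)).Nodup) →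
        ∃ P : G.Walk b a, P.IsPath ∧ (P.edges.map (coverColoring G X)).Nodup :=
    fun ⟨P, hP, hc⟩ => ⟨P.reverse, hP.reverse, by
      rwa [Walk.edges_reverse, List.map_reverse, List.nodup_reverse]⟩
  by_cases hu : u ∈ coverCore G X <;> by_cases hv : v ∈ coverCore G X
  · obtain ⟨P, hP, hPS⟩ := exists_isPath_support_subset_coverCore hG hu hv
    exact ⟨P, hP, nodup_map_edges_coverColoring hP hPS⟩
  · exact reverse (exists_rainbow_path_of_notMem_of_mem hX hG hv hu)
  · exact exists_rainbow_path_of_notMem_of_mem hX hG hu hv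
  · obtain rfl | huv := eq_or_ne u v
    · exact ⟨.nil, by simp, by simp⟩
    · exact exists_rainbow_path_of_notMem_of_notMem hX hG hu hv huv

end Coloring

section Counting

variable {V : Type*} [Finite V] [Nonempty V] {G : SimpleGraph V} {X : Set V}

lemma ncard_coverCore_le (hX : _root_.IsVertexCover G X) :
    (coverCore G X).ncard ≤ X.ncard + 2 ^ X.ncard :=
  calc (coverCore G X).ncard ≤ (X ∪ typeRep G X '' 𝒫 X).ncard :=
        Set.ncard_le_ncard (coverCore_subset hX)
    _ ≤ X.ncard + (typeRep G X '' 𝒫 X).ncard := Set.ncard_union_le _ _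
    _ ≤ X.ncard + 2 ^ X.ncard := by
        grw [Set.ncard_image_le (Set.toFinite _), Set.ncard_powerset]

lemma ncard_image_coverColoring_le (hX : _root_.IsVertexCover G X) :
    (coverColoring G X '' G.edgeSet).ncard ≤
      X.ncard * (X.ncard + 2 ^ X.ncard) + {e | G.IsBridge e}.ncard + 2 ^ X.ncard * X.ncard := by
  grw [Set.ncard_le_ncard (image_coverColoring_subset hX), Set.ncard_union_le,
    Set.ncard_image_of_injective _ Sum.inl_injective,
    Set.ncard_image_of_injective _ Sum.inr_injective,
    Set.ncard_union_le, ncard_image_mk_uncurry_prod_le, ncard_image_mk_uncurry_prod_le,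
    ncard_coverCore_le hX, Set.ncard_image_le (Set.toFinite _), Set.ncard_powerset]

end Counting

theorem rc_le_of_few_bridges {V : Type*} [Fintype V] (G : SimpleGraph V)
    (hG : G.Connected) (X : Set V) (p z : ℕ)
    (hX : _root_.IsVertexCover G X) (hcard : X.ncard = p)
    (hz : ({e : Sym2 V | G.IsBridge e} : Set (Sym2 V)).ncard = z)
    (hsmall : z < 2 * p - 2 + p * (p ^ 2 + 2 * p * 2 ^ p)) :
    rc G ≤ (2 * p - 2 + p * (p ^ 2 + 2 * p * 2 ^ p)) + p ^ 2 + 2 ^ p * (2 * p) := by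
  have := hG.nonempty
  calc rc G ≤ (coverColoring G X '' G.edgeSet).ncard :=
        rc_le_ncard_image _ (exists_rainbow_path_coverColoring hX hG.preconnected)
    _ ≤ p * (p + 2 ^ p) + z + 2 ^ p * p := hcard ▸ hz ▸ ncard_image_coverColoring_le hX
    _ = z + (p ^ 2 + 2 ^ p * (2 * p)) := by ring
    _ ≤ _ := by omega
end

section
/- If a connected graph G on n vertices has a spanning tree with at least k leaves (vertices of degree 1 in the tree), then rvc(G) ≤ n - k + 1; in particular, rvc(G) ≤ n - k if k ≥ 1 and n - k ≥ 1. -/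
open SimpleGraph

/-!
Join `u` and `v` by the path between them in the spanning tree. An internal vertex of a path has
two distinct neighbours on it, so it is not a leaf of the tree. Hence any colouring that is
injective on the non-leaves and arbitrary on the leaves is a rainbow vertex colouring of `G`, and
the non-leaves can be coloured with `n - k` colours (one colour suffices when there are none).
-/

lemma Set.Finite.exists_injOn_lt_max_ncard {α : Type*} {s : Set α} (hs : s.Finite) :
    ∃ c : α → ℕ, (∀ a, c a < max s.ncard 1) ∧ s.InjOn c := by
  classical
  refine ⟨fun a => if h : a ∈ hs.toFinset then hs.toFinset.equivFin ⟨a, h⟩ else 0, ?_, ?_⟩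
  · intro a
    dsimp only
    split_ifs
    · rw [Set.ncard_eq_toFinset_card s hs]
      exact lt_max_of_lt_left (Fin.isLt _)
    · exact lt_max_of_lt_right one_pos
  · intro a ha b hb hab
    simp only [hs.mem_toFinset.mpr ha, hs.mem_toFinset.mpr hb, dif_pos] at hab
    exact congrArg Subtype.val (hs.toFinset.equivFin.injective (Fin.val_injective hab))

namespace SimpleGraph

variable {V : Type*} {G H : SimpleGraph V}

namespace Walk

@[simp]
lemma internals_nil {u : V} : (nil : G.Walk u u).internals = [] := rfl

@[simp]
lemma internals_cons_nil {u v : V} (h : G.Adj u v) : (cons h nil).internals = [] := rfl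

@[simp]
lemma internals_cons_cons {u v w x : V} (h : G.Adj u v) (h' : G.Adj v w) (p : G.Walk w x) :
    (cons h (cons h' p)).internals = v :: (cons h' p).internals := by
  simp [internals, support_cons, List.dropLast_cons_of_ne_nil]

lemma internals_mapLe (hGH : G ≤ H) {u v : V} (p : G.Walk u v) :
    (p.mapLe hGH).internals = p.internals := by
  simp [internals, mapLe]

lemma IsPath.neighborSet_nontrivial_of_mem_internals {u v w : V} {p : G.Walk u v}
    (hp : p.IsPath) (hw : w ∈ p.internals) : (G.neighborSet w).Nontrivial := by
  induction p with
  | nil => simp at hw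
  | @cons a b _ h q ih =>
    cases q with
    | nil => simp at hw
    | @cons _ d _ h' r =>
      rw [cons_isPath_iff] at hp
      rw [internals_cons_cons, List.mem_cons] at hw
      rcases hw with rfl | hw
      · refine ⟨a, h.symm, d, h', ?_⟩
        rintro rfl
        exact hp.2 (by simp)
      · exact ih hp.1 hw

end Walk

lemma isRainbowVertexColoring_mono {c : V → ℕ} (hGH : G ≤ H)
    (hc : IsRainbowVertexColoring G c) : IsRainbowVertexColoring H c := fun u v => by
  obtain ⟨p, hp, hnd⟩ := hc u v
  exact ⟨p.mapLe hGH, hp.mapLe hGH, by rwa [Walk.internals_mapLe]⟩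

lemma isRainbowVertexColoring_of_injOn (hG : G.Preconnected) {c : V → ℕ}
    (hc : Set.InjOn c {v | (G.neighborSet v).Nontrivial}) : IsRainbowVertexColoring G c :=
  fun u v => by
  classical
  obtain ⟨p, hp⟩ := (hG u v).some.toPath
  have hnodup : p.internals.Nodup :=
    ((List.dropLast_sublist _).trans (List.tail_sublist _)).nodup hp.support_nodup
  exact ⟨p, hp, hnodup.map_on fun x hx y hy hxy =>
    hc (hp.neighborSet_nontrivial_of_mem_internals hx)
      (hp.neighborSet_nontrivial_of_mem_internals hy) hxy⟩

lemma rvc_le_of_isRainbowVertexColoring {c : V → ℕ} {k : ℕ} (hc : IsRainbowVertexColoring G c)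
    (hck : ∀ v, c v < k) : rvc G ≤ k :=
  Nat.sInf_le ⟨c, hck, hc⟩

lemma rvc_le_max_ncard_of_le [Finite V] (hHG : H ≤ G) (hH : H.Preconnected) :
    rvc G ≤ max {v | (H.neighborSet v).ncard = 1}ᶜ.ncard 1 := by
  obtain ⟨c, hc_lt, hc_inj⟩ :=
    (Set.toFinite {v | (H.neighborSet v).ncard = 1}ᶜ).exists_injOn_lt_max_ncard
  have hsub : {v | (H.neighborSet v).Nontrivial} ⊆ {v | (H.neighborSet v).ncard = 1}ᶜ :=
    fun _ hv => (Set.one_lt_ncard_iff_nontrivial.mpr hv).ne'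
  have hrainbow : IsRainbowVertexColoring H c :=
    isRainbowVertexColoring_of_injOn hH (hc_inj.mono hsub)
  exact rvc_le_of_isRainbowVertexColoring (isRainbowVertexColoring_mono hHG hrainbow) hc_lt

end SimpleGraph

theorem rvc_le_of_spanning_tree_leaves_general {V : Type*} [Fintype V] (G : SimpleGraph V)
    (T : SimpleGraph V) (hTG : T ≤ G) (hT : T.IsTree) (k : ℕ)
    (hk : k ≤ ({v : V | (T.neighborSet v).ncard = 1} : Set V).ncard) :
    rvc G ≤ Fintype.card V - k + 1 ∧
    (1 ≤ k → 1 ≤ Fintype.card V - k → rvc G ≤ Fintype.card V - k) := by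
  have hrvc := rvc_le_max_ncard_of_le hTG hT.connected.preconnected
  have hcard := Set.ncard_add_ncard_compl {v : V | (T.neighborSet v).ncard = 1}
  rw [Nat.card_eq_fintype_card] at hcard
  omega

theorem rvc_le_of_spanning_tree_leaves {V : Type*} [Fintype V] (G : SimpleGraph V)
    (hG : G.Connected) (T : SimpleGraph V) (hTG : T ≤ G) (hT : T.IsTree) (k : ℕ)
    (hk : k ≤ ({v : V | (T.neighborSet v).ncard = 1} : Set V).ncard) :
    rvc G ≤ Fintype.card V - k + 1 ∧
    (1 ≤ k → 1 ≤ Fintype.card V - k → rvc G ≤ Fintype.card V - k) :=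
  rvc_le_of_spanning_tree_leaves_general G T hTG hT k hk
end

section
/- Let K_n ∘ K₁ be the corona of the complete graph K_n with K₁ (n ≥ 2), with pendant p_v attached to each vertex v of K_n, and let P be a set of pairs of pendants. The vertices of K_n ∘ K₁ can be colored with k colors so that every pair {p_u, p_v} ∈ P is joined by a shortest path whose internal vertices have distinct colors, if and only if the graph H on vertex set V(K_n) with edge set {uv : {p_u,p_v} ∈ P} is properly k-vertex-colorable. -/
open SimpleGraph

/-- The corona G ∘ K₁ : each vertex (inl u) of G gets a pendant (inr u). -/
def corona {V : Type*} (G : SimpleGraph V) : SimpleGraph (V ⊕ V) :=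
  SimpleGraph.fromRel (fun a b =>
    (∃ u v, a = Sum.inl u ∧ b = Sum.inl v ∧ G.Adj u v) ∨
    (∃ u, a = Sum.inl u ∧ b = Sum.inr u))

/- In `corona G` the pendant `inr u` has `inl u` as its only neighbour, and `inl u` is not adjacent
to any other pendant. So for `G.Adj u v` the pendants `inr u` and `inr v` are at distance 3, and the
only walk of that length is `inr u, inl u, inl v, inr v`; its internal vertices are `inl u, inl v`.
A coloring is therefore rainbow on a shortest pendant path exactly when it separates `u` and `v`. -/

section Corona

open Sum

variable {V : Type*} {G : SimpleGraph V} {u v : V} {x : V ⊕ V}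

lemma corona_adj_inr_left : (corona G).Adj (inr u) x ↔ x = inl u := by
  cases x <;> simp [corona, eq_comm]

lemma corona_adj_inr_right : (corona G).Adj x (inr u) ↔ x = inl u := by
  rw [adj_comm, corona_adj_inr_left]

lemma corona_adj_inl_inl : (corona G).Adj (inl u) (inl v) ↔ G.Adj u v := by
  simp only [corona, fromRel_adj]
  simpa [G.adj_comm v u] using fun h : G.Adj u v => G.ne_of_adj h

def coronaPendantWalk (h : G.Adj u v) : (corona G).Walk (inr u) (inr v) :=
  .cons (corona_adj_inr_left.2 rfl)
    (.cons (corona_adj_inl_inl.2 h) (.cons (corona_adj_inr_right.2 rfl) .nil))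

lemma coronaPendantWalk_isPath (h : G.Adj u v) : (coronaPendantWalk h).IsPath := by
  simp [Walk.isPath_def, coronaPendantWalk, G.ne_of_adj h]

lemma three_le_length_of_corona_walk (huv : u ≠ v) (p : (corona G).Walk (inr u) (inr v)) :
    3 ≤ p.length := by
  rcases p with _ | ⟨h₁, _ | ⟨h₂, _ | ⟨_, p⟩⟩⟩
  · exact absurd rfl huv
  · simpa using corona_adj_inr_left.1 h₁
  · exact absurd (inl_injective <|
      (corona_adj_inr_left.1 h₁).symm.trans (corona_adj_inr_right.1 h₂)) huv
  · simp

lemma internals_eq_of_corona_walk_length_eq_three (p : (corona G).Walk (inr u) (inr v))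
    (hp : p.length = 3) : p.internals = [inl u, inl v] := by
  rcases p with _ | ⟨h₁, _ | ⟨_, _ | ⟨h₃, _ | ⟨_, _⟩⟩⟩⟩ <;> simp at hp
  obtain rfl := corona_adj_inr_left.1 h₁
  obtain rfl := corona_adj_inr_right.1 h₃
  rfl

lemma corona_dist_inr_inr (h : G.Adj u v) : (corona G).dist (inr u) (inr v) = 3 := by
  have hle : (corona G).dist (inr u) (inr v) ≤ 3 := dist_le (coronaPendantWalk h)
  obtain ⟨p, hp⟩ := (coronaPendantWalk h).reachable.exists_walk_length_eq_dist
  have hge := three_le_length_of_corona_walk (G.ne_of_adj h) p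
  omega

lemma corona_exists_shortest_rainbow_path_iff {α : Type*} (h : G.Adj u v) (c : V ⊕ V → α) :
    (∃ p : (corona G).Walk (inr u) (inr v),
      p.IsPath ∧ p.length = (corona G).dist (inr u) (inr v) ∧ (p.internals.map c).Nodup) ↔
      c (inl u) ≠ c (inl v) := by
  rw [corona_dist_inr_inr h]
  constructor
  · rintro ⟨p, -, hlen, hnodup⟩
    simpa [internals_eq_of_corona_walk_length_eq_three p hlen] using hnodup
  · intro hne
    exact ⟨coronaPendantWalk h, coronaPendantWalk_isPath h, rfl,
      by simpa [Walk.internals, coronaPendantWalk]⟩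

end Corona

theorem subset_srvc_iff_colorable_general {V : Type*}
    (P : Set (Sym2 V)) (k : ℕ) :
    (∃ c : V ⊕ V → ℕ, (∀ x, c x < k) ∧
      ∀ u v : V, s(u, v) ∈ P →
        ∃ p : (corona (⊤ : SimpleGraph V)).Walk (Sum.inr u) (Sum.inr v), p.IsPath ∧
          p.length =
            (corona (⊤ : SimpleGraph V)).dist (Sum.inr u) (Sum.inr v) ∧
          (p.internals.map c).Nodup) ↔
    (∃ c : V → ℕ, (∀ v, c v < k) ∧
      ∀ u v : V, (SimpleGraph.fromEdgeSet P).Adj u v → c u ≠ c v) := by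
  constructor
  · rintro ⟨c, hck, hc⟩
    refine ⟨c ∘ Sum.inl, fun v => hck _, fun u v huv => ?_⟩
    rw [fromEdgeSet_adj] at huv
    exact (corona_exists_shortest_rainbow_path_iff ((top_adj _ _).2 huv.2) c).1 (hc u v huv.1)
  · rintro ⟨c, hck, hc⟩
    refine ⟨Sum.elim c c, fun x => by cases x <;> exact hck _, fun u v huv => ?_⟩
    obtain rfl | hne := eq_or_ne u v
    · exact ⟨.nil, .nil, by simp, by simp [Walk.internals]⟩
    · exact (corona_exists_shortest_rainbow_path_iff ((top_adj _ _).2 hne) _).2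
        (hc u v ((fromEdgeSet_adj _).2 ⟨huv, hne⟩))

theorem subset_srvc_iff_colorable {V : Type*} [Fintype V] [DecidableEq V]
    (hn : 2 ≤ Fintype.card V) (P : Set (Sym2 V)) (hP : ∀ e ∈ P, ¬ e.IsDiag) (k : ℕ) :
    (∃ c : V ⊕ V → ℕ, (∀ x, c x < k) ∧
      ∀ u v : V, s(u, v) ∈ P →
        ∃ p : (corona (⊤ : SimpleGraph V)).Walk (Sum.inr u) (Sum.inr v), p.IsPath ∧
          p.length =
            (corona (⊤ : SimpleGraph V)).dist (Sum.inr u) (Sum.inr v) ∧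
          (p.internals.map c).Nodup) ↔
    (∃ c : V → ℕ, (∀ v, c v < k) ∧
      ∀ u v : V, (SimpleGraph.fromEdgeSet P).Adj u v → c u ≠ c v) :=
  subset_srvc_iff_colorable_general P k
end
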